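/- arXiv:math/9912064 — 4 statements merged into one kernel-verified Lean document; each statement's English description precedes it below -/
import Mathlib

section
/- Drinfeld case of the local model: for r = n-1, the open subset U_τ of the standard local model is isomorphic to Spec O[a₀, ..., a_{n-1}]/(a_{n-1} a_{n-2} ⋯ a₀ - π), which is a flat O-scheme with reduced special fibre. -/
/-!
Over the discrete valuation ring `O` flatness is torsion-freeness, and since every nonzero `c ∈ O`
is a unit times a power of `π`, the quotient by `P = ∏ aᵢ - π` is torsion-free as soon as `P` is
coprime to `π` in the factorial ring `O[a]`. This holds because `π` stays prime in `O[a]` and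
`P ≡ ∏ aᵢ ≢ 0 mod π`. The special fibre is reduced because `∏ aᵢ` is a product of pairwise
non-associated primes, hence squarefree.
-/

open MvPolynomial

theorem Module.isTorsionFree_quotient_span_singleton {R A : Type*} [CommRing R] [IsDomain R]
    [CommRing A] [DecompositionMonoid A] [Algebra R A] {P : A}
    (hP : ∀ c : R, c ≠ 0 → IsRelPrime P (algebraMap R A c)) :
    Module.IsTorsionFree R (A ⧸ Ideal.span {P}) := by
  refine Module.isTorsionFree_iff_smul_eq_zero.mpr fun c m hcm =>
    or_iff_not_imp_left.mpr fun hc => ?_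
  obtain ⟨f, rfl⟩ := Ideal.Quotient.mk_surjective m
  rw [Algebra.smul_def, ← Ideal.Quotient.mk_algebraMap, ← map_mul,
    Ideal.Quotient.eq_zero_iff_mem, Ideal.mem_span_singleton] at hcm
  rw [Ideal.Quotient.eq_zero_iff_mem, Ideal.mem_span_singleton]
  exact (hP c hc).dvd_of_dvd_mul_left hcm

theorem IsDiscreteValuationRing.isRelPrime_algebraMap {O A : Type*} [CommRing O] [IsDomain O]
    [IsDiscreteValuationRing O] [CommRing A] [DecompositionMonoid A] [Algebra O A] {π : O}
    (hπ : Irreducible π) {P : A} (hP : IsRelPrime P (algebraMap O A π)) {c : O} (hc : c ≠ 0) :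
    IsRelPrime P (algebraMap O A c) := by
  obtain ⟨k, u, rfl⟩ := eq_unit_mul_pow_irreducible hc hπ
  rw [map_mul, map_pow, isRelPrime_mul_unit_left_right (u.isUnit.map _)]
  exact hP.pow_right

theorem MvPolynomial.isRelPrime_prod_X_sub_C_C {O σ : Type*} [CommRing O] [IsDomain O]
    [Fintype σ] {π : O} (hπ : Prime π) :
    IsRelPrime (∏ i, X i - C π : MvPolynomial σ O) (C π) := by
  have : (Ideal.span {π}).IsPrime := (Ideal.span_singleton_prime hπ.ne_zero).mpr hπ
  have hmod (r : O) : Ideal.Quotient.mk (Ideal.span {π}) r = 0 ↔ π ∣ r := by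
    rw [Ideal.Quotient.eq_zero_iff_mem, Ideal.mem_span_singleton]
  refine (((prime_C_iff σ).mpr hπ).irreducible.isRelPrime_iff_not_dvd.mpr ?_).symm
  rw [C_dvd_iff_map_hom_eq_zero _ π hmod, map_sub, map_C, (hmod π).mpr dvd_rfl, C_0, sub_zero,
    map_prod]
  simpa only [map_X] using Finset.prod_ne_zero_iff.mpr fun i _ => X_ne_zero i

theorem MvPolynomial.squarefree_prod_X {K σ : Type*} [CommRing K] [IsDomain K]
    [UniqueFactorizationMonoid K] (s : Finset σ) :
    Squarefree (∏ i ∈ s, X i : MvPolynomial σ K) :=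
  Finset.squarefree_prod_of_pairwise_isCoprime
    (fun _ _ _ _ hij => X_prime.irreducible.isRelPrime_iff_not_dvd.mpr (hij ∘ X_dvd_X.mp))
    fun _ _ => X_prime.squarefree

theorem MvPolynomial.isReduced_quotient_span_prod_X {K σ : Type*} [CommRing K] [IsDomain K]
    [UniqueFactorizationMonoid K] [Fintype σ] :
    IsReduced (MvPolynomial σ K ⧸ Ideal.span {∏ i, (X i : MvPolynomial σ K)}) :=
  (Ideal.isRadical_iff_quotient_reduced _).mp
    (isRadical_iff_span_singleton.mp (squarefree_prod_X _).isRadical)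

theorem drinfeld_local_model_flat_reduced_general
    (O : Type) [CommRing O] [IsDomain O] [IsDiscreteValuationRing O]
    (π : O) (hπ : Irreducible π) (n : ℕ) :
    Module.Flat O (MvPolynomial (Fin n) O ⧸
      (Ideal.span {(∏ i : Fin n, MvPolynomial.X i) - MvPolynomial.C π} :
        Ideal (MvPolynomial (Fin n) O))) ∧
    IsReduced (MvPolynomial (Fin n) (IsLocalRing.ResidueField O) ⧸
      (Ideal.span {∏ i : Fin n, MvPolynomial.X i} :
        Ideal (MvPolynomial (Fin n) (IsLocalRing.ResidueField O)))) := by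
  have := Module.isTorsionFree_quotient_span_singleton (R := O) fun c hc =>
    IsDiscreteValuationRing.isRelPrime_algebraMap hπ
      (isRelPrime_prod_X_sub_C_C (σ := Fin n) hπ.prime) hc
  exact ⟨inferInstance, isReduced_quotient_span_prod_X⟩

/-- Drinfeld case of the local model: for `r = n - 1` the open subset `U_τ` of the
standard local model is `Spec O[a₀, …, a_{n-1}]/(a_{n-1} ⋯ a₀ - π)`; this is a flat
`O`-scheme and its special fibre `k[a₀, …, a_{n-1}]/(a_{n-1} ⋯ a₀)` is reduced. -/
theorem drinfeld_local_model_flat_reduced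
    (O : Type) [CommRing O] [IsDomain O] [IsDiscreteValuationRing O]
    (π : O) (hπ : Irreducible π) (n : ℕ) (hn : 0 < n) :
    Module.Flat O (MvPolynomial (Fin n) O ⧸
      (Ideal.span {(∏ i : Fin n, MvPolynomial.X i) - MvPolynomial.C π} :
        Ideal (MvPolynomial (Fin n) O))) ∧
    IsReduced (MvPolynomial (Fin n) (IsLocalRing.ResidueField O) ⧸
      (Ideal.span {∏ i : Fin n, MvPolynomial.X i} :
        Ideal (MvPolynomial (Fin n) (IsLocalRing.ResidueField O)))) :=
  drinfeld_local_model_flat_reduced_general O π hπ n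
end

section
/- Duality of generalized local models: for free O-modules Λ₀, ..., Λ_{m-1} of rank n with O-linear maps φ_i: Λ_i → Λ_{i+1} (indices mod m), the functor sending an O-scheme S to tuples of rank-r locally free locally-direct-summand submodules F_i ⊆ Λ_{i,S} with φ_i(F_i) ⊆ F_{i+1} is isomorphic to the analogous functor with rank n-r, via F_i ↦ (Λ_{i,S}/F_i)^∨ and the dual maps. -/
/-!
The dot product identifies `Sⁿ` with its dual, so `orth F` is the annihilator of `F`. A splitting
`Sⁿ = F ⊕ G` induces a splitting of the dual into the annihilators of `F` and `G`, with
`ann F ≅ (Sⁿ/F)^∨ ≅ G^∨`; hence `orth` swaps the ranks of a summand and of its complement. As the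
pairing is symmetric, `F ≤ orth (orth F)` and `G ≤ orth (orth G)`, and complementary pairs nested
like this coincide, so `orth` is an involution on direct summands. Finally
`(A x) ⬝ᵥ y = x ⬝ᵥ (Aᵀ y)` turns `A F ≤ F'` into `Aᵀ (orth F') ≤ orth F`, which reverses the
direction of the chain.
-/

open Matrix Module

/-- The "orthogonal complement" of a submodule `F ⊆ Sⁿ` with respect to the standard
pairing: the preimage of the dual annihilator of `F` under the standard identification
`Sⁿ ≅ (Sⁿ)^∨`.  This realizes `(Sⁿ/F)^∨` as a submodule of `Sⁿ ≅ (Sⁿ)^∨`. -/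
noncomputable def orth {S : Type} [CommRing S] {n : ℕ}
    (F : Submodule S (Fin n → S)) : Submodule S (Fin n → S) :=
  Submodule.comap
    ((Pi.basisFun S (Fin n)).toDualEquiv.toLinearMap :
      (Fin n → S) →ₗ[S] Module.Dual S (Fin n → S))
    F.dualAnnihilator

/-- The moduli set `M(m, n, r, (ψᵢ))` of chains of rank-`r` locally free
locally-direct-summand submodules `Fᵢ ⊆ Λ_{i,S} = Sⁿ` with `ψᵢ(Fᵢ) ⊆ F_{i+1}`
(indices mod `m`). -/
def Chain (S : Type) [CommRing S] (m n : ℕ) [NeZero m] (r : ℕ)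
    (ψ : Fin m → ((Fin n → S) →ₗ[S] (Fin n → S))) : Type :=
  {F : Fin m → Submodule S (Fin n → S) //
    (∀ i, ∃ G : Submodule S (Fin n → S), IsCompl (F i) G ∧
      Nonempty (F i ≃ₗ[S] (Fin r → S)) ∧ Nonempty (G ≃ₗ[S] (Fin (n - r) → S))) ∧
    ∀ i, (F i).map (ψ i) ≤ F (i + 1)}

theorem eq_of_isCompl_of_le {α : Type*} [Lattice α] [BoundedOrder α] [IsModularLattice α]
    {a b a' b' : α} (h : IsCompl a b) (h' : IsCompl a' b') (ha : a ≤ a') (hb : b ≤ b') :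
    a = a' := by
  calc a = a ⊔ b ⊓ a' := by rw [(h'.disjoint.symm.mono_left hb).eq_bot, sup_bot_eq]
    _ = a' := by rw [← sup_inf_assoc_of_le b ha, h.sup_eq_top, top_inf_eq]

section DualAnnihilator

variable {R M : Type*} [CommRing R] [AddCommGroup M] [Module R M] {W W' : Submodule R M}

theorem Submodule.isCompl_dualAnnihilator_of_isCompl (h : IsCompl W W') :
    IsCompl W.dualAnnihilator W'.dualAnnihilator := by
  constructor
  · rw [disjoint_iff, ← dualAnnihilator_sup_eq, h.sup_eq_top, dualAnnihilator_top]
  · rw [codisjoint_iff, eq_top_iff]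
    intro φ _
    have hφ : φ = φ ∘ₗ W'.projection W h.symm + φ ∘ₗ W.projection W' h := by
      rw [← LinearMap.comp_add, add_comm, projection_add_projection_eq_id, LinearMap.comp_id]
    rw [hφ]
    refine add_mem_sup ?_ ?_ <;> rw [mem_dualAnnihilator] <;> intro x hx
    · simp [projection_apply_of_mem_right h.symm hx]
    · simp [projection_apply_of_mem_right h hx]

noncomputable def Submodule.dualAnnihilatorEquivDualOfIsCompl (h : IsCompl W W') :
    W.dualAnnihilator ≃ₗ[R] Dual R W' :=
  W.dualQuotEquivDualAnnihilator.symm ≪≫ₗ (W.quotientEquivOfIsCompl W' h).symm.dualMap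

end DualAnnihilator

section Orth

variable {S : Type} [CommRing S] {n : ℕ} {F G : Submodule S (Fin n → S)}

theorem Pi.basisFun_toDual_apply (x y : Fin n → S) :
    (Pi.basisFun S (Fin n)).toDual x y = x ⬝ᵥ y := by
  simp [Basis.toDual, dotProduct]

theorem mem_orth {x : Fin n → S} : x ∈ orth F ↔ ∀ y ∈ F, x ⬝ᵥ y = 0 := by
  simp [orth, Submodule.mem_dualAnnihilator, Pi.basisFun_toDual_apply]

theorem le_orth_orth (F : Submodule S (Fin n → S)) : F ≤ orth (orth F) := fun x hx =>
  mem_orth.2 fun y hy => dotProduct_comm x y ▸ mem_orth.1 hy x hx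

theorem map_transpose_orth_le_orth {A : Matrix (Fin n) (Fin n) S}
    {F' : Submodule S (Fin n → S)} (h : F.map A.mulVecLin ≤ F') :
    (orth F').map Aᵀ.mulVecLin ≤ orth F := by
  rintro _ ⟨x, hx, rfl⟩
  refine mem_orth.2 fun y hy => ?_
  rw [mulVecLin_apply, mulVec_transpose, ← dotProduct_mulVec]
  exact mem_orth.1 hx _ (h ⟨y, hy, rfl⟩)

theorem isCompl_orth (h : IsCompl F G) : IsCompl (orth F) (orth G) :=
  (Submodule.orderIsoMapComap (Pi.basisFun S (Fin n)).toDualEquiv).symm.isCompl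
    (Submodule.isCompl_dualAnnihilator_of_isCompl h)

theorem orth_orth (h : IsCompl F G) : orth (orth F) = F :=
  (eq_of_isCompl_of_le h (isCompl_orth (isCompl_orth h)) (le_orth_orth F) (le_orth_orth G)).symm

theorem nonempty_orth_linearEquiv {k : ℕ} (h : IsCompl F G) (eG : G ≃ₗ[S] (Fin k → S)) :
    Nonempty (orth F ≃ₗ[S] (Fin k → S)) :=
  ⟨(Pi.basisFun S (Fin n)).toDualEquiv.ofSubmodule' F.dualAnnihilator ≪≫ₗ
    F.dualAnnihilatorEquivDualOfIsCompl h ≪≫ₗ eG.symm.dualMap ≪≫ₗ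
    (Pi.basisFun S (Fin k)).toDualEquiv.symm⟩

def IsFreeSummand (F : Submodule S (Fin n → S)) (r k : ℕ) : Prop :=
  ∃ G, IsCompl F G ∧ Nonempty (F ≃ₗ[S] (Fin r → S)) ∧ Nonempty (G ≃ₗ[S] (Fin k → S))

theorem isFreeSummand_orth {r k : ℕ} (hF : IsFreeSummand F r k) : IsFreeSummand (orth F) k r :=
  let ⟨G, hFG, ⟨eF⟩, ⟨eG⟩⟩ := hF
  ⟨orth G, isCompl_orth hFG, nonempty_orth_linearEquiv hFG eG,
    nonempty_orth_linearEquiv hFG.symm eF⟩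

end Orth

namespace Chain

variable {S : Type} [CommRing S] {n m r : ℕ} [NeZero m] (A : Fin m → Matrix (Fin n) (Fin n) S)

theorem map_transpose_orth_le {F : Fin m → Submodule S (Fin n → S)}
    (hF : ∀ i, (F i).map (A i).mulVecLin ≤ F (i + 1)) (j : Fin m) :
    (orth (F (-j))).map (A (-(j + 1)))ᵀ.mulVecLin ≤ orth (F (-(j + 1))) := by
  refine map_transpose_orth_le_orth ?_
  simpa only [show -(j + 1) + 1 = -j by abel] using hF (-(j + 1))

theorem map_orth_le {G : Fin m → Submodule S (Fin n → S)}
    (hG : ∀ j, (G j).map (A (-(j + 1)))ᵀ.mulVecLin ≤ G (j + 1)) (i : Fin m) :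
    (orth (G (-i))).map (A i).mulVecLin ≤ orth (G (-(i + 1))) := by
  have h := map_transpose_orth_le_orth (hG (-(i + 1)))
  rwa [show -(i + 1) + 1 = -i by abel, neg_neg, transpose_transpose] at h

noncomputable def orthEquiv (hr : r ≤ n) :
    Chain S m n r (fun i => (A i).mulVecLin) ≃
      Chain S m n (n - r) (fun j => (A (-(j + 1)))ᵀ.mulVecLin) where
  toFun F := ⟨fun j => orth (F.1 (-j)),
    fun j => by rw [Nat.sub_sub_self hr]; exact isFreeSummand_orth (F.2.1 (-j)),
    map_transpose_orth_le A F.2.2⟩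
  invFun G := ⟨fun i => orth (G.1 (-i)),
    fun i => show IsFreeSummand _ r (n - r) by
      simpa only [Nat.sub_sub_self hr] using isFreeSummand_orth (G.2.1 (-i)),
    map_orth_le A G.2.2⟩
  left_inv F := Subtype.ext <| funext fun i => by
    obtain ⟨_, hc, -⟩ := F.2.1 i
    simpa only [neg_neg] using orth_orth hc
  right_inv G := Subtype.ext <| funext fun j => by
    obtain ⟨_, hc, -⟩ := G.2.1 j
    simpa only [neg_neg] using orth_orth hc

end Chain

/-- Duality of generalized local models: for free `O`-modules `Λ₀, …, Λ_{m-1}` of rank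
`n` with `O`-linear maps `φᵢ : Λᵢ → Λ_{i+1}` (indices mod `m`), the functor of chains of
rank-`r` subbundles `Fᵢ ⊆ Λ_{i,S}` with `φᵢ(Fᵢ) ⊆ F_{i+1}` is isomorphic, on points over
any `O`-algebra `S`, to the analogous functor of rank-`(n-r)` subbundles for the dual
(transposed) maps, via `Fᵢ ↦ (Λ_{i,S}/Fᵢ)^∨ = Fᵢ^⊥` (with the chain direction reversed
by `i ↦ -i`). -/
theorem local_model_duality
    (O : Type) [CommRing O] (S : Type) [CommRing S] [Algebra O S]
    (m n r : ℕ) [NeZero m] (hr : r ≤ n)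
    (φ : Fin m → Matrix (Fin n) (Fin n) O) :
    ∃ e : Chain S m n r (fun i => ((φ i).map (algebraMap O S)).mulVecLin) ≃
        Chain S m n (n - r)
          (fun j => (((φ (-(j + 1))).map (algebraMap O S))ᵀ).mulVecLin),
      ∀ F j, (e F).1 j = orth (F.1 (-j)) :=
  ⟨Chain.orthEquiv (fun i => (φ i).map (algebraMap O S)) hr, fun _ _ => rfl⟩
end

section
/- A minuscule alcove of size r is μ-admissible: if x = (x₁,...,x_n) is an alcove with 0 ≤ x_i(m) - ω_i(m) ≤ 1 for all i, m and size Σ_j x_i(j) - Σ_j ω_i(j) = r, then for each coordinate j the vector (t₁(j), ..., t_n(j)) with t_i = x_i - ω_i is a cyclic permutation of (1^κ, 0^{n-κ}) for some κ depending on j. -/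
/-- The base alcove `ω` for `SL_n`: `ω_i = (1^i, 0^{n-i})` (here `i` runs through
`Fin n`, with `ω i` having ones in the first `i + 1` coordinates). -/
def baseAlcove (n : ℕ) : Fin n → Fin n → ℤ :=
  fun i j => if (j : ℕ) ≤ (i : ℕ) then 1 else 0

/-!
Fix a coordinate `j`. Monotonicity and `x_i ≤ x_1 + (1, …, 1)` force the column `i ↦ x_i(j)` to be
a step function `c + [b ≤ i]`, while `ω_i(j) = [j ≤ i]`. So `t_i(j) = c + [b ≤ i] - [j ≤ i]`, and
requiring its values to lie in `{0, 1}` leaves only three shapes: an interval `[b, j)` of ones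
(`c = 0`), a wrapped-around interval `[b, n) ∪ [0, j)` of ones (`c = 1`), or a constant.
-/

/-- The ones of `(1^κ, 0^{n-κ})` rotated to start at position `a`. -/
def IsCyclicInterval {n : ℕ} (S : Fin n → Prop) : Prop :=
  ∃ (a : Fin n) (κ : ℕ), κ ≤ n ∧ ∀ i : Fin n, S i ↔ ((i - a : Fin n) : ℕ) < κ

section CyclicInterval

variable {n : ℕ} [NeZero n]

theorem Fin.val_sub_ofNat_of_le (i : Fin n) {b : ℕ} (hb : b ≤ n) :
    ((i - Fin.ofNat n b : Fin n) : ℕ) = if b ≤ (i : ℕ) then (i : ℕ) - b else n + i - b := by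
  have hbmod : (Fin.ofNat n b : ℕ) = if b = n then 0 else b := by
    rw [Fin.val_ofNat]
    split_ifs with h
    · simp [h]
    · exact Nat.mod_eq_of_lt (by omega)
  have hi := i.isLt
  rcases le_or_gt (Fin.ofNat n b : ℕ) (i : ℕ) with h | h
  · rw [Fin.sub_val_of_le (Fin.le_def.mpr h)]
    split_ifs at hbmod ⊢ <;> omega
  · rw [Fin.coe_sub_iff_lt.mpr (Fin.lt_def.mpr h)]
    split_ifs at hbmod ⊢ <;> omega

theorem isCyclicInterval_of_forall_iff_le_and_lt {S : Fin n → Prop} {b e : ℕ} (hbe : b ≤ e)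
    (he : e ≤ n) (hS : ∀ i : Fin n, S i ↔ b ≤ (i : ℕ) ∧ (i : ℕ) < e) : IsCyclicInterval S := by
  refine ⟨Fin.ofNat n b, e - b, by omega, fun i => ?_⟩
  rw [hS i, Fin.val_sub_ofNat_of_le i (hbe.trans he)]
  have hi := i.isLt
  split_ifs <;> omega

theorem isCyclicInterval_of_forall_iff_le_or_lt {S : Fin n → Prop} {b e : ℕ} (heb : e ≤ b)
    (hb : b ≤ n) (hS : ∀ i : Fin n, S i ↔ b ≤ (i : ℕ) ∨ (i : ℕ) < e) : IsCyclicInterval S := by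
  refine ⟨Fin.ofNat n b, n - b + e, by omega, fun i => ?_⟩
  rw [hS i, Fin.val_sub_ofNat_of_le i hb]
  have hi := i.isLt
  split_ifs <;> omega

theorem isCyclicInterval_of_forall_iff {S : Fin n → Prop} (p : Prop) (hS : ∀ i, S i ↔ p) :
    IsCyclicInterval S := by
  by_cases hp : p
  · exact isCyclicInterval_of_forall_iff_le_and_lt (Nat.zero_le n) le_rfl
      fun i => by simp [hS, hp, i.isLt]
  · exact isCyclicInterval_of_forall_iff_le_and_lt le_rfl (Nat.zero_le n)
      fun i => by simp [hS, hp]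

theorem isCyclicInterval_of_step_sub_step {t : Fin n → ℤ} {c : ℤ} {b e : ℕ} (hb : b ≤ n)
    (he : e ≤ n)
    (ht : ∀ i : Fin n, t i = c + (if b ≤ (i : ℕ) then 1 else 0) - (if e ≤ (i : ℕ) then 1 else 0))
    (h01 : ∀ i, 0 ≤ t i ∧ t i ≤ 1) : IsCyclicInterval (fun i => t i = 1) := by
  by_cases hc : b ≤ e ∧ c = 0 ∨ e ≤ b ∧ c = 1
  · rcases hc with ⟨hbe, rfl⟩ | ⟨heb, rfl⟩
    · exact isCyclicInterval_of_forall_iff_le_and_lt hbe he fun i => by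
        rw [ht i]; split_ifs <;> omega
    · exact isCyclicInterval_of_forall_iff_le_or_lt heb hb fun i => by
        rw [ht i]; split_ifs <;> omega
  · refine isCyclicInterval_of_forall_iff (t 0 = 1) fun i => ?_
    have := ht i; have := ht 0; have := h01 i; have := h01 0
    split_ifs at * <;> omega

end CyclicInterval

theorem exists_eq_add_ite_of_monotone {n : ℕ} [NeZero n] {f : Fin n → ℤ} (hf : Monotone f)
    (hwrap : ∀ i, f i ≤ f 0 + 1) :
    ∃ b ≤ n, ∀ i : Fin n, f i = f 0 + if b ≤ (i : ℕ) then 1 else 0 := by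
  classical
  have hP : ∃ b : ℕ, ∀ i : Fin n, b ≤ (i : ℕ) → f i = f 0 + 1 :=
    ⟨n, fun i hi => absurd i.isLt (by omega)⟩
  refine ⟨Nat.find hP, Nat.find_min' hP fun i hi => absurd i.isLt (by omega), fun i => ?_⟩
  split_ifs with hi
  · exact Nat.find_spec hP i hi
  · have hlow := hf (Fin.zero_le i)
    have hne : f i ≠ f 0 + 1 := fun hfi => hi <| Nat.find_min' hP fun i' hii' =>
      le_antisymm (hwrap i') (hfi ▸ hf (Fin.le_def.mpr hii'))
    have := hwrap i
    omega

theorem minuscule_alcove_cyclic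
    (n : ℕ) [NeZero n] (x : Fin n → Fin n → ℤ)
    (hmono : ∀ i₁ i₂ : Fin n, i₁ ≤ i₂ → ∀ j, x i₁ j ≤ x i₂ j)
    (hwrap : ∀ i j, x i j ≤ x 0 j + 1)
    (hmin : ∀ i j, 0 ≤ x i j - baseAlcove n i j ∧ x i j - baseAlcove n i j ≤ 1) :
    ∀ j : Fin n, ∃ (a : Fin n) (κ : ℕ), κ ≤ n ∧
      ∀ i : Fin n, x i j - baseAlcove n i j = 1 ↔ ((i - a : Fin n) : ℕ) < κ := by
  intro j
  obtain ⟨b, hb, hstep⟩ :=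
    exists_eq_add_ite_of_monotone (fun i₁ i₂ h => hmono i₁ i₂ h j) (fun i => hwrap i j)
  exact isCyclicInterval_of_step_sub_step (c := x 0 j) hb j.isLt.le
    (fun i => by simp only [hstep i, baseAlcove]) (fun i => hmin i j)
end

section
/- If an O-scheme X of finite type, with O a discrete valuation ring, has reduced special fibre and every generic point of the special fibre is the specialization of a point of the generic fibre (lies in the closure of the generic fibre), then X is flat over O. -/
/-!
If `π ^ n * a = 0`, then `a` lies in every prime avoiding `π`, hence in every minimal prime over
`(π)` (each contains such a prime), hence in `(π)` because `(π)` is radical. So the `π`-power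
torsion `T` satisfies `T = π T`, and Nakayama's lemma kills it. Over a DVR, a module without
`π`-torsion is torsion-free, hence flat.
-/

open Submodule

theorem Ideal.torsion'_powers_le_of_isRadical {A : Type*} [CommRing A] {I : Ideal A}
    (hI : I.IsRadical) {t : A}
    (h : ∀ p ∈ I.minimalPrimes, ∃ q : Ideal A, q.IsPrime ∧ t ∉ q ∧ q ≤ p) :
    torsion' A A (Submonoid.powers t) ≤ I := by
  rintro a ⟨⟨_, n, rfl⟩, hn⟩
  rw [← hI.radical, ← Ideal.sInf_minimalPrimes]
  refine Submodule.mem_sInf.2 fun p hp ↦ ?_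
  obtain ⟨q, hq, htq, hqp⟩ := h p hp
  have hmem : t ^ n * a ∈ q := by
    rw [show t ^ n * a = 0 from hn]
    exact q.zero_mem
  exact hqp ((hq.mem_or_mem hmem).resolve_left fun ht ↦ htq (hq.mem_of_pow_mem n ht))

theorem isSMulRegular_of_torsion'_powers_le_smul_top {R M : Type*} [CommRing R]
    [AddCommGroup M] [Module R M] [IsNoetherian R M] {t : R}
    (h : torsion' R M (Submonoid.powers t) ≤ Ideal.span {t} • ⊤) : IsSMulRegular M t := by
  set T := torsion' R M (Submonoid.powers t)
  have hT : T ≤ Ideal.span {t} • T := by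
    rintro x ⟨⟨_, n, rfl⟩, hn⟩
    rw [ideal_span_singleton_smul] at h ⊢
    obtain ⟨y, -, rfl⟩ := (mem_smul_pointwise_iff_exists _ _ _).1 (h ⟨_, hn⟩)
    refine smul_mem_pointwise_smul y t T ⟨⟨t ^ (n + 1), n + 1, rfl⟩, ?_⟩
    simpa [Submonoid.smul_def, pow_succ, mul_smul] using hn
  obtain ⟨r, hr, hrT⟩ := exists_sub_one_mem_and_smul_eq_zero_of_fg_of_le_smul _ T
    (IsNoetherian.noetherian T) hT
  -- `r ≡ 1 mod t` kills `T`, so `x = (1 - r) • x` is a multiple of `t • x = 0`.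
  refine .of_right_eq_zero_of_smul fun x hx ↦ ?_
  have hxT : x ∈ T := ⟨⟨t, 1, pow_one t⟩, hx⟩
  obtain ⟨c, hc⟩ := Ideal.mem_span_singleton'.1 (neg_sub r 1 ▸ neg_mem hr)
  calc x = (1 - r) • x := by rw [sub_smul, one_smul, hrT x hxT, sub_zero]
    _ = 0 := by rw [← hc, mul_smul, hx, smul_zero]

theorem IsDiscreteValuationRing.flat_of_isSMulRegular {O M : Type*} [CommRing O] [IsDomain O]
    [IsDiscreteValuationRing O] [AddCommGroup M] [Module O M] {π : O} (hπ : Irreducible π)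
    (h : IsSMulRegular M π) : Module.Flat O M := by
  have : Module.IsTorsionFree O M :=
    .of_smul_eq_zero fun r m hrm ↦ or_iff_not_imp_left.2 fun hr ↦ by
      obtain ⟨n, u, hu⟩ := associated_pow_irreducible hr hπ
      have hreg : IsSMulRegular M (r * u) := hu ▸ h.pow n
      exact hreg.right_eq_zero_of_smul (by rw [mul_comm, mul_smul, hrm, smul_zero])
  infer_instance

/-- If an `O`-scheme `X = Spec A` of finite type, `O` a discrete valuation ring with
uniformizer `π`, has reduced special fibre and every generic point of the special
fibre (i.e. every minimal prime over `(π)`) lies in the closure of the generic fibre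
(i.e. contains a prime not containing `π`), then `X` is flat over `O`. -/
theorem flat_of_reduced_special_fibre_and_lifting
    (O A : Type) [CommRing O] [IsDomain O] [IsDiscreteValuationRing O]
    [CommRing A] [Algebra O A] [Algebra.FiniteType O A]
    (π : O) (hπ : Irreducible π)
    (hred : IsReduced (A ⧸ (Ideal.span {algebraMap O A π} : Ideal A)))
    (hlift : ∀ p ∈ (Ideal.span {algebraMap O A π} : Ideal A).minimalPrimes,
      ∃ q : Ideal A, q.IsPrime ∧ algebraMap O A π ∉ q ∧ q ≤ p) :
    Module.Flat O A := by
  have : IsNoetherianRing A := Algebra.FiniteType.isNoetherianRing O A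
  have htors := Ideal.torsion'_powers_le_of_isRadical
    ((Ideal.isRadical_iff_quotient_reduced _).2 hred) hlift
  rw [← Ideal.mul_top (Ideal.span _)] at htors
  have hreg : IsSMulRegular A (algebraMap O A π) :=
    isSMulRegular_of_torsion'_powers_le_smul_top htors
  exact IsDiscreteValuationRing.flat_of_isSMulRegular hπ
    ((isSMulRegular_algebraMap_iff A).1 hreg)
end
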